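/- arXiv:1907.10742 — 3 statements merged into one kernel-verified Lean document; each statement's English description precedes it below -/
import Mathlib

section
/- Let G be (r,s)-robust with coloring and let G' be obtained from G by adding a new vertex u together with edges from u to at least r+s−1 vertices of G all sharing a common color (u is assigned an arbitrary color). Then G' is (r,s)-robust with coloring. -/
variable {V : Type*} {Γ : Type*}

/-- Neighbors of `v` outside `S`. -/
def nOut (G : SimpleGraph V) (S : Set V) (v : V) : Set V :=
  {u | G.Adj v u ∧ u ∉ S}

/-- `v` is `r`-valid with respect to `S`: it has at least `r` neighbors outside `S`
sharing a common color, or two neighbors outside `S` with distinct colors. -/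
def RValid (G : SimpleGraph V) (C : V → Γ) (r : ℕ) (S : Set V) (v : V) : Prop :=
  (∃ c : Γ, r ≤ {u | u ∈ nOut G S v ∧ C u = c}.ncard) ∨
  (∃ u ∈ nOut G S v, ∃ w ∈ nOut G S v, C u ≠ C w)

/-- The set of `r`-valid nodes of `S`. -/
def validSet (G : SimpleGraph V) (C : V → Γ) (r : ℕ) (S : Set V) : Set V :=
  {v ∈ S | RValid G C r S v}

/-- All nodes of `S` share one color. -/
def MonoChromatic (C : V → Γ) (S : Set V) : Prop := ∀ u ∈ S, ∀ w ∈ S, C u = C w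

/-- `(r,s)`-robustness with coloring. -/
def RSRobustC (G : SimpleGraph V) (C : V → Γ) (r s : ℕ) : Prop :=
  ∀ S1 S2 : Set V, S1.Nonempty → S2.Nonempty → Disjoint S1 S2 →
    (validSet G C r S1).ncard = S1.ncard ∨
    (validSet G C r S2).ncard = S2.ncard ∨
    (MonoChromatic C (validSet G C r S1 ∪ validSet G C r S2) ∧
      s ≤ (validSet G C r S1 ∪ validSet G C r S2).ncard) ∨
    (∃ u ∈ validSet G C r S1 ∪ validSet G C r S2,
      ∃ w ∈ validSet G C r S1 ∪ validSet G C r S2, C u ≠ C w)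

/-- Classical `(r,s)`-robustness. -/
def RSRobust (G : SimpleGraph V) (r s : ℕ) : Prop :=
  ∀ S1 S2 : Set V, S1.Nonempty → S2.Nonempty → Disjoint S1 S2 →
    ({v ∈ S1 | r ≤ (nOut G S1 v).ncard}).ncard = S1.ncard ∨
    ({v ∈ S2 | r ≤ (nOut G S2 v).ncard}).ncard = S2.ncard ∨
    s ≤ ({v ∈ S1 | r ≤ (nOut G S1 v).ncard} ∪ {v ∈ S2 | r ≤ (nOut G S2 v).ncard}).ncard

/-- `v` has three neighbors outside `S` with pairwise distinct colors. -/
def ThreeDistinct (G : SimpleGraph V) (C : V → Γ) (S : Set V) (v : V) : Prop :=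
  ∃ a ∈ nOut G S v, ∃ b ∈ nOut G S v, ∃ c ∈ nOut G S v,
    C a ≠ C b ∧ C a ≠ C c ∧ C b ≠ C c

/-- `r`-robustness with coloring. -/
def RRobustC (G : SimpleGraph V) (C : V → Γ) (r : ℕ) : Prop :=
  ∀ S1 S2 : Set V, S1.Nonempty → S2.Nonempty → Disjoint S1 S2 →
    (∃ v ∈ S1, r ≤ (nOut G S1 v).ncard ∨ ThreeDistinct G C S1 v) ∨
    (∃ v ∈ S2, r ≤ (nOut G S2 v).ncard ∨ ThreeDistinct G C S2 v)

/-- Classical `r`-robustness. -/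
def RRobust (G : SimpleGraph V) (r : ℕ) : Prop :=
  ∀ S1 S2 : Set V, S1.Nonempty → S2.Nonempty → Disjoint S1 S2 →
    (∃ v ∈ S1, r ≤ (nOut G S1 v).ncard) ∨ (∃ v ∈ S2, r ≤ (nOut G S2 v).ncard)

/-- Mono-chromatic robustness. -/
def MonoRobust (G : SimpleGraph V) (C : V → Γ) : Prop :=
  ∀ S1 S2 : Set V, S1.Nonempty → S2.Nonempty → Disjoint S1 S2 →
    (∃ v ∈ S1, ThreeDistinct G C S1 v) ∨ (∃ v ∈ S2, ThreeDistinct G C S2 v)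

/-!
Vertices of `G` keep their validity in `G'`, since passing to `Option V` only adds the new
vertex `u = none` as a potential outside neighbour. So every pair `S1', S2'` of `G'` (say
`u ∉ S2'`) inherits the conclusion of robustness from the traces `S1, S2` on `V`, except when
all of `S1` is valid and `u ∈ S1'` is not. Then `u` has fewer than `r` neighbours outside
`S1'`, all in `T`; as `|T| ≥ r + s - 1`, at least `s` vertices of `T` lie in `S1`, and all of
them are valid.
-/

section Transfer

variable {W : Type*} {G : SimpleGraph V} {G' : SimpleGraph W} {C : V → Γ} {C' : W → Γ}
  {r s : ℕ}

def MonoLargeOrBichromatic (C : V → Γ) (s : ℕ) (X : Set V) : Prop :=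
  (MonoChromatic C X ∧ s ≤ X.ncard) ∨ ∃ u ∈ X, ∃ w ∈ X, C u ≠ C w

lemma monoLargeOrBichromatic_of_subset [Finite V] {A B : Set V} (hBA : B ⊆ A)
    (hB : s ≤ B.ncard) : MonoLargeOrBichromatic C s A := by
  by_cases h : MonoChromatic C A
  · exact Or.inl ⟨h, hB.trans (Set.ncard_le_ncard hBA)⟩
  · simp only [MonoChromatic, not_forall] at h
    obtain ⟨u, hu, w, hw, hne⟩ := h
    exact Or.inr ⟨u, hu, w, hw, hne⟩

lemma MonoLargeOrBichromatic.image [Finite W] {f : V → W} (hf : Function.Injective f)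
    (hC : ∀ v, C' (f v) = C v) {X : Set V} {Y : Set W} (hXY : f '' X ⊆ Y)
    (h : MonoLargeOrBichromatic C s X) : MonoLargeOrBichromatic C' s Y := by
  rcases h with ⟨-, hs⟩ | ⟨u, hu, w, hw, hne⟩
  · exact monoLargeOrBichromatic_of_subset hXY (by rwa [Set.ncard_image_of_injective _ hf])
  · exact Or.inr ⟨f u, hXY ⟨u, hu, rfl⟩, f w, hXY ⟨w, hw, rfl⟩, by rwa [hC, hC]⟩

def RobustPair (G : SimpleGraph V) (C : V → Γ) (r s : ℕ) (S1 S2 : Set V) : Prop :=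
  (validSet G C r S1).ncard = S1.ncard ∨ (validSet G C r S2).ncard = S2.ncard ∨
    MonoLargeOrBichromatic C s (validSet G C r S1 ∪ validSet G C r S2)

lemma rsRobustC_iff : RSRobustC G C r s ↔ ∀ S1 S2 : Set V, S1.Nonempty → S2.Nonempty →
    Disjoint S1 S2 → RobustPair G C r s S1 S2 :=
  Iff.rfl

lemma RobustPair.symm {S1 S2 : Set V} (h : RobustPair G C r s S1 S2) :
    RobustPair G C r s S2 S1 := by
  unfold RobustPair at h ⊢
  rw [Set.union_comm]
  tauto

lemma validSet_eq_of_ncard_eq [Finite V] {S : Set V}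
    (h : (validSet G C r S).ncard = S.ncard) : validSet G C r S = S :=
  Set.eq_of_subset_of_ncard_le (fun _ hv => hv.1) h.ge

lemma rValid_of_monochromatic {S : Set V} {v : V} (hmono : MonoChromatic C (nOut G S v))
    (hr : r ≤ (nOut G S v).ncard) : RValid G C r S v := by
  left
  rcases (nOut G S v).eq_empty_or_nonempty with h | ⟨t, ht⟩
  · exact ⟨C v, by simp_all⟩
  · refine ⟨C t, hr.trans_eq (congrArg _ ?_)⟩
    ext u
    exact ⟨fun hu => ⟨hu, hmono u hu t ht⟩, And.left⟩

lemma image_nOut_preimage_subset (f : G →g G') (S' : Set W) (v : V) :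
    f '' nOut G (f ⁻¹' S') v ⊆ nOut G' S' (f v) := by
  rintro _ ⟨u, ⟨hadj, hu⟩, rfl⟩
  exact ⟨f.map_adj hadj, hu⟩

lemma RValid.map [Finite W] (f : G →g G') (hf : Function.Injective f)
    (hC : ∀ v, C' (f v) = C v) {S' : Set W} {v : V} (h : RValid G C r (f ⁻¹' S') v) :
    RValid G' C' r S' (f v) := by
  have hsub := image_nOut_preimage_subset f S' v
  rcases h with ⟨c, hc⟩ | ⟨u, hu, w, hw, hne⟩
  · refine Or.inl ⟨c, hc.trans ?_⟩
    rw [← Set.ncard_image_of_injective _ hf]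
    refine Set.ncard_le_ncard ?_ (Set.toFinite _)
    rintro _ ⟨u, ⟨hu, rfl⟩, rfl⟩
    exact ⟨hsub ⟨u, hu, rfl⟩, hC u⟩
  · exact Or.inr ⟨f u, hsub ⟨u, hu, rfl⟩, f w, hsub ⟨w, hw, rfl⟩, by rwa [hC, hC]⟩

lemma image_validSet_preimage_subset [Finite W] (f : G →g G') (hf : Function.Injective f)
    (hC : ∀ v, C' (f v) = C v) (S' : Set W) :
    f '' validSet G C r (f ⁻¹' S') ⊆ validSet G' C' r S' := by
  rintro _ ⟨v, ⟨hv, hval⟩, rfl⟩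
  exact ⟨hv, hval.map f hf hC⟩

lemma validSet_eq_self_of_preimage [Finite W] (f : G →g G') (hf : Function.Injective f)
    (hC : ∀ v, C' (f v) = C v) {S' : Set W}
    (h : validSet G C r (f ⁻¹' S') = f ⁻¹' S')
    (hS' : ∀ x ∈ S', x ∉ Set.range f → RValid G' C' r S' x) :
    validSet G' C' r S' = S' := by
  refine subset_antisymm (fun _ hx => hx.1) fun x hx => ?_
  by_cases hx' : x ∈ Set.range f
  · obtain ⟨v, rfl⟩ := hx'
    exact image_validSet_preimage_subset f hf hC S' ⟨v, h.symm ▸ hx, rfl⟩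
  · exact ⟨hx, hS' x hx hx'⟩

end Transfer

section AddVertex

variable {G : SimpleGraph V} {G' : SimpleGraph (Option V)} {C : V → Γ} {cu : Γ}
  {r s : ℕ} {T : Set V}

lemma nOut_none (hadjU : ∀ a : V, G'.Adj none (some a) ↔ a ∈ T) (S' : Set (Option V)) :
    nOut G' S' none = some '' (T \ some ⁻¹' S') := by
  ext (_ | t)
  · simp [nOut]
  · simp [nOut, hadjU]

lemma ncard_diff_lt_of_not_rValid_none (hadjU : ∀ a : V, G'.Adj none (some a) ↔ a ∈ T)
    (hTmono : MonoChromatic C T) {S' : Set (Option V)}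
    (h : ¬ RValid G' (fun x => x.elim cu C) r S' none) : (T \ some ⁻¹' S').ncard < r := by
  contrapose! h
  apply rValid_of_monochromatic
  · rw [nOut_none hadjU]
    rintro _ ⟨a, ha, rfl⟩ _ ⟨b, hb, rfl⟩
    exact hTmono a ha.1 b hb.1
  · rwa [nOut_none hadjU, Set.ncard_image_of_injective _ (Option.some_injective V)]

lemma robustPair_option_of_validSet_preimage_eq [Finite V]
    (hadj : ∀ a b : V, G.Adj a b → G'.Adj (some a) (some b))
    (hadjU : ∀ a : V, G'.Adj none (some a) ↔ a ∈ T) (hTcard : r + s - 1 ≤ T.ncard)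
    (hTmono : MonoChromatic C T) {S1' : Set (Option V)} (S2' : Set (Option V))
    (hX1 : validSet G C r (some ⁻¹' S1') = some ⁻¹' S1') :
    RobustPair G' (fun x => x.elim cu C) r s S1' S2' := by
  let f : G →g G' := ⟨some, hadj _ _⟩
  have hf : Function.Injective f := Option.some_injective V
  have hC : ∀ v, (fun x => x.elim cu C) (f v) = C v := fun _ => rfl
  by_cases hnone : none ∈ S1' → RValid G' (fun x => x.elim cu C) r S1' none
  · refine Or.inl (congrArg Set.ncard (validSet_eq_self_of_preimage f hf hC hX1 ?_))
    rintro (_ | v) hx hxr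
    · exact hnone hx
    · exact absurd ⟨v, rfl⟩ hxr
  · have hsmall := ncard_diff_lt_of_not_rValid_none hadjU hTmono (Classical.not_imp.1 hnone).2
    have hsplit := Set.ncard_inter_add_ncard_sdiff_eq_ncard T (some ⁻¹' S1')
    refine Or.inr (Or.inr (monoLargeOrBichromatic_of_subset
      (B := some '' (T ∩ some ⁻¹' S1')) ?_ ?_))
    · rintro _ ⟨t, ⟨-, ht⟩, rfl⟩
      exact Or.inl (image_validSet_preimage_subset f hf hC S1' ⟨t, hX1.ge ht, rfl⟩)
    · rw [Set.ncard_image_of_injective _ (Option.some_injective V)]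
      omega

lemma robustPair_option_of_none_notMem_right [Finite V]
    (hadj : ∀ a b : V, G.Adj a b → G'.Adj (some a) (some b))
    (hadjU : ∀ a : V, G'.Adj none (some a) ↔ a ∈ T) (hTcard : r + s - 1 ≤ T.ncard)
    (hTmono : MonoChromatic C T) (hG : RSRobustC G C r s) {S1' S2' : Set (Option V)}
    (h2 : S2'.Nonempty) (hdisj : Disjoint S1' S2') (hn2 : none ∉ S2') :
    RobustPair G' (fun x => x.elim cu C) r s S1' S2' := by
  let f : G →g G' := ⟨some, hadj _ _⟩
  have hf : Function.Injective f := Option.some_injective V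
  have hC : ∀ v, (fun x => x.elim cu C) (f v) = C v := fun _ => rfl
  have hfull := robustPair_option_of_validSet_preimage_eq (cu := cu) (S1' := S1') hadj hadjU hTcard
    hTmono S2'
  have hS2 : (some ⁻¹' S2').Nonempty := by
    obtain ⟨_ | v, hv⟩ := h2
    · exact absurd hv hn2
    · exact ⟨v, hv⟩
  rcases (some ⁻¹' S1').eq_empty_or_nonempty with hS1 | hS1
  · exact hfull (by rw [hS1]; exact Set.sep_empty _)
  rcases rsRobustC_iff.1 hG _ _ hS1 hS2 (hdisj.preimage some) with h | h | h
  · exact hfull (validSet_eq_of_ncard_eq h)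
  · refine Or.inr (Or.inl (congrArg Set.ncard
      (validSet_eq_self_of_preimage f hf hC (validSet_eq_of_ncard_eq h) ?_)))
    rintro (_ | v) hx hxr
    · exact absurd hx hn2
    · exact absurd ⟨v, rfl⟩ hxr
  · refine Or.inr (Or.inr (h.image hf hC ?_))
    rw [Set.image_union]
    exact Set.union_subset_union (image_validSet_preimage_subset f hf hC S1')
      (image_validSet_preimage_subset f hf hC S2')

end AddVertex

theorem rsRobustC_add_vertex_mono_general [Fintype V] (G : SimpleGraph V)
    (G' : SimpleGraph (Option V)) (C : V → Γ) (cu : Γ) (r s : ℕ)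
    (T : Set V)
    (hadj : ∀ a b : V, G'.Adj (some a) (some b) ↔ G.Adj a b)
    (hadjU : ∀ a : V, G'.Adj none (some a) ↔ a ∈ T)
    (hTcard : r + s - 1 ≤ T.ncard)
    (hTmono : MonoChromatic C T)
    (hG : RSRobustC G C r s) :
    RSRobustC G' (fun x => x.elim cu C) r s := by
  intro S1' S2' h1 h2 hdisj
  have hhom : ∀ a b : V, G.Adj a b → G'.Adj (some a) (some b) := fun a b => (hadj a b).2
  by_cases hn2 : none ∈ S2'
  · have hn1 : none ∉ S1' := fun hn1 => Set.disjoint_left.1 hdisj hn1 hn2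
    exact (robustPair_option_of_none_notMem_right hhom hadjU hTcard hTmono hG h1 hdisj.symm
      hn1).symm
  · exact robustPair_option_of_none_notMem_right hhom hadjU hTcard hTmono hG h2 hdisj hn2

theorem rsRobustC_add_vertex_mono [Fintype V] (G : SimpleGraph V)
    (G' : SimpleGraph (Option V)) (C : V → Γ) (cu : Γ) (r s : ℕ)
    (hr : 1 < r) (hs : 1 < s) (T : Set V)
    (hadj : ∀ a b : V, G'.Adj (some a) (some b) ↔ G.Adj a b)
    (hadjU : ∀ a : V, G'.Adj none (some a) ↔ a ∈ T)
    (hTcard : r + s - 1 ≤ T.ncard)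
    (hTmono : MonoChromatic C T)
    (hG : RSRobustC G C r s) :
    RSRobustC G' (fun x => x.elim cu C) r s :=
  rsRobustC_add_vertex_mono_general G G' C cu r s T hadj hadjU hTcard hTmono hG
end

section
/- Let G be (r,s)-robust with coloring and let G' be obtained from G by adding a new vertex u together with edges from u to at least max(r,s) vertices of G of some common color C_k and at least one vertex of a different color C_j ≠ C_k. Then G' is (r,s)-robust with coloring. -/
variable {V : Type*} {Γ : Type*}

/-!
The vertices of `G` keep their validity in `G'`, since every neighbour outside `S` in `G` stays
one in `G'`. So applying the robustness of `G` to the old vertices of `S1`, `S2` (after making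
`S2` avoid the new vertex `u`) settles everything unless all old vertices of `S1` are valid in `G'`.
Then only `u` can fail, and if it does, fewer than `r` of its `ck`-neighbours lie outside `S1`
and its neighbour `w` of another colour cannot lie outside `S1` together with any of them. Either
`w ∈ S1` meets a `ck`-neighbour in `S1`, giving two valid nodes of distinct colours, or all
`max r s` of the `ck`-neighbours lie in `S1` and are valid.
-/

variable {W : Type*}

def RSRobustCPair (G : SimpleGraph V) (C : V → Γ) (r s : ℕ) (S1 S2 : Set V) : Prop :=
  (validSet G C r S1).ncard = S1.ncard ∨
    (validSet G C r S2).ncard = S2.ncard ∨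
    (MonoChromatic C (validSet G C r S1 ∪ validSet G C r S2) ∧
      s ≤ (validSet G C r S1 ∪ validSet G C r S2).ncard) ∨
    (∃ u ∈ validSet G C r S1 ∪ validSet G C r S2,
      ∃ w ∈ validSet G C r S1 ∪ validSet G C r S2, C u ≠ C w)

lemma validSet_subset (G : SimpleGraph V) (C : V → Γ) (r : ℕ) (S : Set V) :
    validSet G C r S ⊆ S :=
  fun _ hv => hv.1

lemma rValid_of_subset_nOut [Finite V] {G : SimpleGraph V} {C : V → Γ} {r : ℕ} {S A : Set V}
    {v : V} {c : Γ} (hA : A ⊆ nOut G S v) (hAc : ∀ a ∈ A, C a = c) (hr : r ≤ A.ncard) :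
    RValid G C r S v :=
  Or.inl ⟨c, hr.trans (Set.ncard_le_ncard fun a ha => ⟨hA ha, hAc a ha⟩)⟩

lemma mapsTo_nOut {G : SimpleGraph V} {G' : SimpleGraph W} (f : G ↪g G') (S : Set W) (v : V) :
    Set.MapsTo f (nOut G (f ⁻¹' S) v) (nOut G' S (f v)) :=
  fun _ ha => ⟨f.map_adj_iff.2 ha.1, ha.2⟩

lemma mapsTo_validSet [Finite W] {G : SimpleGraph V} {G' : SimpleGraph W} (f : G ↪g G')
    (C' : W → Γ) (r : ℕ) (S : Set W) :
    Set.MapsTo f (validSet G (C' ∘ f) r (f ⁻¹' S)) (validSet G' C' r S) := by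
  rintro v ⟨hv, ⟨c, hc⟩ | ⟨a, ha, b, hb, hab⟩⟩
  · refine ⟨hv, Or.inl ⟨c, hc.trans ?_⟩⟩
    rw [← Set.ncard_image_of_injective _ f.injective]
    refine Set.ncard_le_ncard ?_
    rintro _ ⟨a, ⟨ha, hac⟩, rfl⟩
    exact ⟨mapsTo_nOut f S v ha, hac⟩
  · exact ⟨hv, Or.inr ⟨f a, mapsTo_nOut f S v ha, f b, mapsTo_nOut f S v hb, hab⟩⟩

namespace RSRobustCPair

variable {G : SimpleGraph V} {C : V → Γ} {r s : ℕ} {S1 S2 : Set V}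

lemma symm (h : RSRobustCPair G C r s S1 S2) : RSRobustCPair G C r s S2 S1 := by
  unfold RSRobustCPair at h ⊢
  rw [Set.union_comm]
  tauto

lemma of_validSet_eq_left (h : validSet G C r S1 = S1) : RSRobustCPair G C r s S1 S2 :=
  Or.inl (congrArg Set.ncard h)

lemma of_ne_color {u w : V} (hu : u ∈ validSet G C r S1 ∪ validSet G C r S2)
    (hw : w ∈ validSet G C r S1 ∪ validSet G C r S2) (huw : C u ≠ C w) :
    RSRobustCPair G C r s S1 S2 :=
  Or.inr (Or.inr (Or.inr ⟨u, hu, w, hw, huw⟩))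

lemma of_le_ncard_subset [Finite V] {A : Set V}
    (hA : A ⊆ validSet G C r S1 ∪ validSet G C r S2) (hs : s ≤ A.ncard) :
    RSRobustCPair G C r s S1 S2 := by
  by_cases hmono : MonoChromatic C (validSet G C r S1 ∪ validSet G C r S2)
  · exact Or.inr (Or.inr (Or.inl ⟨hmono, hs.trans (Set.ncard_le_ncard hA)⟩))
  · simp only [MonoChromatic, not_forall] at hmono
    obtain ⟨u, hu, w, hw, huw⟩ := hmono
    exact of_ne_color hu hw huw

lemma of_preimage [Finite W] {G' : SimpleGraph W} {C' : W → Γ} {S1 S2 : Set W} (f : G ↪g G')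
    (hS2 : S2 ⊆ Set.range f) (h : RSRobustCPair G (C' ∘ f) r s (f ⁻¹' S1) (f ⁻¹' S2)) :
    RSRobustCPair G' C' r s S1 S2 ∨ ∀ a ∈ f ⁻¹' S1, f a ∈ validSet G' C' r S1 := by
  have : Finite V := Finite.of_injective f f.injective
  have hmaps := (mapsTo_validSet f C' r S1).union_union (mapsTo_validSet f C' r S2)
  rcases h with h1 | h2 | ⟨-, hcard⟩ | ⟨u, hu, v, hv, huv⟩
  · have hX1 := Set.eq_of_subset_of_ncard_le (validSet_subset _ _ _ _) h1.ge
    exact Or.inr fun a ha => mapsTo_validSet f C' r S1 (hX1.ge ha)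
  · have hX2 := Set.eq_of_subset_of_ncard_le (validSet_subset _ _ _ _) h2.ge
    refine Or.inl (of_validSet_eq_left ?_).symm
    refine (validSet_subset _ _ _ _).antisymm fun y hy => ?_
    obtain ⟨a, rfl⟩ := hS2 hy
    exact mapsTo_validSet f C' r S2 (hX2.ge hy)
  · refine Or.inl (of_le_ncard_subset hmaps.image_subset ?_)
    rwa [Set.ncard_image_of_injective _ f.injective]
  · exact Or.inl (of_ne_color (hmaps hu) (hmaps hv) huv)

lemma of_forall_ne_mem_validSet [Finite V] {x b : V} {A : Set V} {c : Γ}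
    (hA : A ⊆ G.neighborSet x) (hAc : ∀ a ∈ A, C a = c) (hAcard : max r s ≤ A.ncard)
    (hb : G.Adj x b) (hbc : C b ≠ c) (hS1 : ∀ y ∈ S1, y ≠ x → y ∈ validSet G C r S1) :
    RSRobustCPair G C r s S1 S2 := by
  by_cases hx : x ∈ S1 → RValid G C r S1 x
  · refine of_validSet_eq_left ((validSet_subset _ _ _ _).antisymm fun y hy => ?_)
    by_cases hyx : y = x
    · subst hyx
      exact ⟨hy, hx hy⟩
    · exact hS1 y hy hyx
  obtain ⟨hxS, hxv⟩ := Classical.not_imp.1 hx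
  have hvalid : ∀ y ∈ S1, G.Adj x y → y ∈ validSet G C r S1 := fun y hy hxy => hS1 y hy hxy.ne'
  have hAb : ∀ a ∈ A, C a ≠ C b := fun a ha => (hAc a ha).symm ▸ hbc.symm
  by_cases hbS : b ∈ S1
  · obtain ⟨a, haA, haS⟩ : ∃ a ∈ A, a ∈ S1 := by
      by_contra! hAS
      exact hxv (rValid_of_subset_nOut (fun a ha => ⟨hA ha, hAS a ha⟩) hAc
        (le_of_max_le_left hAcard))
    exact of_ne_color (Or.inl (hvalid a haS (hA haA))) (Or.inl (hvalid b hbS hb)) (hAb a haA)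
  · have hAS : A ⊆ S1 := fun a ha => by
      by_contra haS
      exact hxv (Or.inr ⟨a, ⟨hA ha, haS⟩, b, ⟨hb, hbS⟩, hAb a ha⟩)
    exact of_le_ncard_subset (fun a ha => Or.inl (hvalid a (hAS ha) (hA ha)))
      (le_of_max_le_right hAcard)

end RSRobustCPair

lemma RSRobustC.pair_or_forall_mem_validSet [Finite W] {G : SimpleGraph V} {G' : SimpleGraph W}
    {C' : W → Γ} {r s : ℕ} {S1 S2 : Set W} (f : G ↪g G') (hG : RSRobustC G (C' ∘ f) r s)
    (hS2 : S2 ⊆ Set.range f) (h2 : S2.Nonempty) (hdisj : Disjoint S1 S2) :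
    RSRobustCPair G' C' r s S1 S2 ∨ ∀ a ∈ f ⁻¹' S1, f a ∈ validSet G' C' r S1 := by
  rcases (f ⁻¹' S1).eq_empty_or_nonempty with hS1 | hS1
  · exact Or.inr fun a ha => (hS1.subset ha).elim
  have hS2' : (f ⁻¹' S2).Nonempty := by
    obtain ⟨y, hy⟩ := h2
    obtain ⟨a, rfl⟩ := hS2 hy
    exact ⟨a, hy⟩
  exact RSRobustCPair.of_preimage f hS2 (hG _ _ hS1 hS2' (hdisj.preimage f))

theorem rsRobustC_add_vertex_mixed_general [Fintype V] (G : SimpleGraph V)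
    (G' : SimpleGraph (Option V)) (C : V → Γ) (cu ck : Γ) (r s : ℕ)
    (T Tk : Set V) (w : V)
    (hadj : ∀ a b : V, G'.Adj (some a) (some b) ↔ G.Adj a b)
    (hadjU : ∀ a : V, G'.Adj none (some a) ↔ a ∈ T)
    (hTk : Tk ⊆ T) (hTkcol : ∀ a ∈ Tk, C a = ck) (hTkcard : max r s ≤ Tk.ncard)
    (hw : w ∈ T) (hwc : C w ≠ ck)
    (hG : RSRobustC G C r s) :
    RSRobustC G' (fun x => x.elim cu C) r s := by
  intro S1 S2 h1 h2 hdisj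
  set C' : Option V → Γ := fun x => x.elim cu C
  show RSRobustCPair G' C' r s S1 S2
  wlog hn2 : none ∉ S2 generalizing S1 S2
  · exact (this S2 S1 h2 h1 hdisj.symm fun hn1 => hdisj.ne_of_mem hn1 (not_not.1 hn2) rfl).symm
  let f : G ↪g G' := ⟨⟨some, Option.some_injective V⟩, hadj _ _⟩
  have hS2 : S2 ⊆ Set.range f := fun
    | none, hy => absurd hy hn2
    | some a, _ => ⟨a, rfl⟩
  have hGf : RSRobustC G (C' ∘ f) r s := hG
  refine (hGf.pair_or_forall_mem_validSet f hS2 h2 hdisj).elim id fun hold => ?_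
  refine RSRobustCPair.of_forall_ne_mem_validSet (x := none) (A := some '' Tk) (b := some w)
    ?_ ?_ ?_ ((hadjU w).2 hw) hwc ?_
  · rintro _ ⟨a, ha, rfl⟩
    exact (hadjU a).2 (hTk ha)
  · rintro _ ⟨a, ha, rfl⟩
    exact hTkcol a ha
  · rwa [Set.ncard_image_of_injective _ (Option.some_injective V)]
  · rintro (_ | a) hy hne
    · exact absurd rfl hne
    · exact hold a hy

theorem rsRobustC_add_vertex_mixed [Fintype V] (G : SimpleGraph V)
    (G' : SimpleGraph (Option V)) (C : V → Γ) (cu ck : Γ) (r s : ℕ)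
    (hr : 1 < r) (hs : 1 < s) (T Tk : Set V) (w : V)
    (hadj : ∀ a b : V, G'.Adj (some a) (some b) ↔ G.Adj a b)
    (hadjU : ∀ a : V, G'.Adj none (some a) ↔ a ∈ T)
    (hTk : Tk ⊆ T) (hTkcol : ∀ a ∈ Tk, C a = ck) (hTkcard : max r s ≤ Tk.ncard)
    (hw : w ∈ T) (hwc : C w ≠ ck)
    (hG : RSRobustC G C r s) :
    RSRobustC G' (fun x => x.elim cu C) r s :=
  rsRobustC_add_vertex_mixed_general G G' C cu ck r s T Tk w hadj hadjU hTk hTkcol hTkcard hw hwc hG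
end

section
/- If a colored graph G (with at least 2 vertices) uses at most four distinct colors and every color class is nonempty for at least two colors, then G is not mono-chromatic robust; in particular, at least five colors are required for any graph to be mono-chromatic robust. More precisely: if the coloring C : V → Γ uses at most 4 colors, then there exist nonempty disjoint subsets S1, S2 of V such that no node of S1 ∪ S2 has three neighbors of pairwise distinct colors outside its respective set. -/
variable {V : Type*} {Γ : Type*}

/-!
Split the at most four colours into two nonempty groups `A` and `Aᶜ` of at most two colours each,
and take `S₁ = C⁻¹(A)`, `S₂ = C⁻¹(Aᶜ)`. Every vertex outside `S₁` carries a colour of `Aᶜ` and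
every vertex outside `S₂` a colour of `A`, so no node of `S₁ ∪ S₂` can see three distinct colours
outside its own set.
-/

theorem Set.exists_subset_encard_le_two_sdiff_encard_le_two {α : Type*} {s : Set α}
    (h2 : 2 ≤ s.encard) (h4 : s.encard ≤ 4) :
    ∃ A ⊆ s, A.Nonempty ∧ (s \ A).Nonempty ∧ A.encard ≤ 2 ∧ (s \ A).encard ≤ 2 := by
  have hs : s.Finite := Set.finite_of_encard_le_coe h4
  rw [← hs.cast_ncard_eq] at h2 h4
  norm_cast at h2 h4
  obtain ⟨A, hAs, hA⟩ := Set.exists_subset_encard_eq (k := (max 1 (s.ncard - 2) : ℕ))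
    (by rw [← hs.cast_ncard_eq]; exact_mod_cast (by omega))
  have hsum := Set.encard_sdiff_add_encard_of_subset hAs
  have hsA : (s \ A).Finite := hs.subset Set.sdiff_subset
  rw [hA, ← hs.cast_ncard_eq, ← hsA.cast_ncard_eq] at hsum
  norm_cast at hsum
  refine ⟨A, hAs, ?_⟩
  simp only [← Set.encard_pos, hA, ← hsA.cast_ncard_eq]
  exact_mod_cast (by omega)

theorem not_threeDistinct_of_encard_image_compl_le_two (G : SimpleGraph V) (C : V → Γ)
    {S : Set V} (h : (C '' Sᶜ).encard ≤ 2) (v : V) : ¬ ThreeDistinct G C S v := by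
  rintro ⟨a, ⟨-, ha⟩, b, ⟨-, hb⟩, c, ⟨-, hc⟩, hab, hac, hbc⟩
  have hsub : ({C a, C b, C c} : Set Γ) ⊆ C '' Sᶜ := by
    rintro x (rfl | rfl | rfl)
    exacts [⟨a, ha, rfl⟩, ⟨b, hb, rfl⟩, ⟨c, hc, rfl⟩]
  have h3 : ({C a, C b, C c} : Set Γ).encard = 3 :=
    Set.encard_eq_three.mpr ⟨_, _, _, hab, hac, hbc, rfl⟩
  have : (3 : ℕ∞) ≤ 2 := h3 ▸ (Set.encard_le_encard hsub).trans h
  exact absurd this (by decide)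

theorem not_monoRobust_of_exists_split (G : SimpleGraph V) (C : V → Γ)
    (h : ∃ S1 S2 : Set V, S1.Nonempty ∧ S2.Nonempty ∧ Disjoint S1 S2 ∧
      (∀ v ∈ S1, ¬ ThreeDistinct G C S1 v) ∧ (∀ v ∈ S2, ¬ ThreeDistinct G C S2 v)) :
    ¬ MonoRobust G C := by
  obtain ⟨S1, S2, hS1, hS2, hdisj, hno1, hno2⟩ := h
  intro hM
  rcases hM S1 S2 hS1 hS2 hdisj with ⟨v, hv, h3⟩ | ⟨v, hv, h3⟩
  exacts [hno1 v hv h3, hno2 v hv h3]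

theorem not_monoRobust_of_le_four_colors_general (G : SimpleGraph V) (C : V → Γ)
    (h2 : 2 ≤ (Set.range C).ncard) (h4 : (Set.range C).ncard ≤ 4) :
    (¬ MonoRobust G C) ∧
    ∃ S1 S2 : Set V, S1.Nonempty ∧ S2.Nonempty ∧ Disjoint S1 S2 ∧
      (∀ v ∈ S1, ¬ ThreeDistinct G C S1 v) ∧
      (∀ v ∈ S2, ¬ ThreeDistinct G C S2 v) := by
  have hcard : (Set.range C).encard = (Set.range C).ncard :=
    (Set.finite_of_ncard_pos (by omega)).cast_ncard_eq.symm
  obtain ⟨A, hA, hA_ne, ⟨_, ⟨v₂, rfl⟩, hv₂⟩, hA2, hB2⟩ :=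
    Set.exists_subset_encard_le_two_sdiff_encard_le_two
      (s := Set.range C) (by rw [hcard]; exact_mod_cast h2) (by rw [hcard]; exact_mod_cast h4)
  have hno₁ (v : V) : ¬ ThreeDistinct G C (C ⁻¹' A) v := by
    refine not_threeDistinct_of_encard_image_compl_le_two G C ?_ v
    rwa [← Set.preimage_compl, Set.image_preimage_eq_range_inter, ← Set.sdiff_eq]
  have hno₂ (v : V) : ¬ ThreeDistinct G C (C ⁻¹' A)ᶜ v := by
    refine not_threeDistinct_of_encard_image_compl_le_two G C ?_ v
    rwa [compl_compl, Set.image_preimage_eq_of_subset hA]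
  have hsplit : ∃ S1 S2 : Set V, S1.Nonempty ∧ S2.Nonempty ∧ Disjoint S1 S2 ∧
      (∀ v ∈ S1, ¬ ThreeDistinct G C S1 v) ∧ (∀ v ∈ S2, ¬ ThreeDistinct G C S2 v) :=
    ⟨C ⁻¹' A, (C ⁻¹' A)ᶜ, hA_ne.preimage' hA, ⟨v₂, hv₂⟩, disjoint_compl_right,
      fun v _ => hno₁ v, fun v _ => hno₂ v⟩
  exact ⟨not_monoRobust_of_exists_split G C hsplit, hsplit⟩

theorem not_monoRobust_of_le_four_colors [Fintype V] (G : SimpleGraph V) (C : V → Γ)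
    (h2 : 2 ≤ (Set.range C).ncard) (h4 : (Set.range C).ncard ≤ 4) :
    (¬ MonoRobust G C) ∧
    ∃ S1 S2 : Set V, S1.Nonempty ∧ S2.Nonempty ∧ Disjoint S1 S2 ∧
      (∀ v ∈ S1, ¬ ThreeDistinct G C S1 v) ∧
      (∀ v ∈ S2, ¬ ThreeDistinct G C S2 v) :=
  not_monoRobust_of_le_four_colors_general G C h2 h4
end
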